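/- For a commutative Hopf algebra A, the map R : A⊗A → A⊗A defined by R(α ⊗ β) = β⁽²⁾ ⊗ α S(β⁽¹⁾) β⁽³⁾ satisfies the Yang–Baxter (braid) relation (R ⊗ id)(id ⊗ R)(R ⊗ id) = (id ⊗ R)(R ⊗ id)(id ⊗ R) on A⊗A⊗A. -/

import Mathlib

open TensorProduct LinearMap Coalgebra

noncomputable section

set_option maxHeartbeats 1000000

variable (k A : Type*) [Field k] [CommRing A] [HopfAlgebra k A]

/-- The map A ⊗ (A ⊗ A) → A ⊗ A, x ⊗ (y ⊗ z) ↦ y ⊗ (x·z). -/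
def gAux : A ⊗[k] (A ⊗[k] A) →ₗ[k] A ⊗[k] A :=
  lTensor A (LinearMap.mul' k A) ∘ₗ (TensorProduct.assoc k A A A).toLinearMap ∘ₗ
    rTensor A (TensorProduct.comm k A A).toLinearMap ∘ₗ
    (TensorProduct.assoc k A A A).symm.toLinearMap

/-- The map R : A ⊗ A → A ⊗ A, α ⊗ β ↦ β⁽²⁾ ⊗ α·S(β⁽¹⁾)·β⁽³⁾ (Sweedler notation). -/
def Rmap : A ⊗[k] A →ₗ[k] A ⊗[k] A :=
  gAux k A ∘ₗ lTensor A (gAux k A) ∘ₗ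
    lTensor A (rTensor (A ⊗[k] A) (HopfAlgebra.antipode (R := k))) ∘ₗ
    lTensor A (lTensor A (comul (R := k) (A := A)) ∘ₗ comul)

/-- The map R⁻¹ : A ⊗ A → A ⊗ A, α ⊗ β ↦ α⁽¹⁾·S(α⁽³⁾)·β ⊗ α⁽²⁾ (Sweedler notation). -/
def RmapInv : A ⊗[k] A →ₗ[k] A ⊗[k] A :=
  ((TensorProduct.comm k A A).toLinearMap ∘ₗ gAux k A) ∘ₗ
    lTensor A (lTensor A (LinearMap.mul' k A)) ∘ₗ
    lTensor A (TensorProduct.assoc k A A A).toLinearMap ∘ₗ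
    (TensorProduct.assoc k A (A ⊗[k] A) A).toLinearMap ∘ₗ
    rTensor A (lTensor A (lTensor A (HopfAlgebra.antipode (R := k))) ∘ₗ
      lTensor A (comul (R := k) (A := A)) ∘ₗ comul)


section YBAux
set_option synthInstance.maxHeartbeats 1000000

open HopfAlgebra

/-! ### Generic convolution machinery -/

section Conv

variable {C : Type*} [AddCommMonoid C] [Module k C] [CoalgebraStruct k C]
variable {T : Type*} [Semiring T] [Algebra k T]

/-- Convolution product of two linear maps from a coalgebra to an algebra. -/
noncomputable def ybConv (f g : C →ₗ[k] T) : C →ₗ[k] T :=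
  LinearMap.mul' k T ∘ₗ TensorProduct.map f g ∘ₗ CoalgebraStruct.comul

/-- Convolution unit. -/
noncomputable def ybOne : C →ₗ[k] T :=
  Algebra.linearMap k T ∘ₗ CoalgebraStruct.counit

theorem ybConv_assoc
    (hco : (TensorProduct.assoc k C C C).toLinearMap ∘ₗ
        LinearMap.rTensor C (CoalgebraStruct.comul (R := k)) ∘ₗ CoalgebraStruct.comul =
      LinearMap.lTensor C (CoalgebraStruct.comul (R := k)) ∘ₗ CoalgebraStruct.comul)
    (f g h : C →ₗ[k] T) :
    ybConv k (ybConv k f g) h = ybConv k f (ybConv k g h) := by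
  have key : (LinearMap.mul' k T ∘ₗ
        TensorProduct.map f (LinearMap.mul' k T ∘ₗ TensorProduct.map g h)) ∘ₗ
        (TensorProduct.assoc k C C C).toLinearMap =
      LinearMap.mul' k T ∘ₗ TensorProduct.map (LinearMap.mul' k T ∘ₗ TensorProduct.map f g) h := by
    apply TensorProduct.ext_threefold
    intro x y z
    simp [mul_assoc]
  have lhs : ybConv k (ybConv k f g) h =
      ((LinearMap.mul' k T ∘ₗ TensorProduct.map (LinearMap.mul' k T ∘ₗ TensorProduct.map f g) h) ∘ₗ
        LinearMap.rTensor C (CoalgebraStruct.comul (R := k))) ∘ₗ CoalgebraStruct.comul := by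
    unfold ybConv
    rw [show TensorProduct.map (LinearMap.mul' k T ∘ₗ TensorProduct.map f g ∘ₗ
          CoalgebraStruct.comul (R := k)) h =
        TensorProduct.map (LinearMap.mul' k T ∘ₗ TensorProduct.map f g) h ∘ₗ
          LinearMap.rTensor C (CoalgebraStruct.comul (R := k)) by
      rw [LinearMap.map_comp_rTensor, LinearMap.comp_assoc]]
    simp only [LinearMap.comp_assoc]
  have rhs : ybConv k f (ybConv k g h) =
      ((LinearMap.mul' k T ∘ₗ TensorProduct.map f (LinearMap.mul' k T ∘ₗ TensorProduct.map g h)) ∘ₗ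
        LinearMap.lTensor C (CoalgebraStruct.comul (R := k))) ∘ₗ CoalgebraStruct.comul := by
    unfold ybConv
    rw [show TensorProduct.map f (LinearMap.mul' k T ∘ₗ TensorProduct.map g h ∘ₗ
          CoalgebraStruct.comul (R := k)) =
        TensorProduct.map f (LinearMap.mul' k T ∘ₗ TensorProduct.map g h) ∘ₗ
          LinearMap.lTensor C (CoalgebraStruct.comul (R := k)) by
      rw [LinearMap.map_comp_lTensor, LinearMap.comp_assoc]]
    simp only [LinearMap.comp_assoc]
  rw [lhs, rhs, ← key]
  simp only [LinearMap.comp_assoc, hco]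

theorem ybOne_conv
    (hl : LinearMap.rTensor C (CoalgebraStruct.counit (R := k)) ∘ₗ CoalgebraStruct.comul =
      TensorProduct.mk k k C 1)
    (f : C →ₗ[k] T) : ybConv k (ybOne k) f = f := by
  have e : TensorProduct.map (ybOne k (C := C) (T := T)) f =
      TensorProduct.map (Algebra.linearMap k T) f ∘ₗ
        LinearMap.rTensor C (CoalgebraStruct.counit (R := k)) := by
    rw [LinearMap.map_comp_rTensor]; rfl
  unfold ybConv
  rw [e, LinearMap.comp_assoc, hl]
  ext c
  simp [Algebra.algebraMap_eq_smul_one]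

theorem ybConv_one
    (hr : LinearMap.lTensor C (CoalgebraStruct.counit (R := k)) ∘ₗ CoalgebraStruct.comul =
      (TensorProduct.mk k C k).flip 1)
    (f : C →ₗ[k] T) : ybConv k f (ybOne k) = f := by
  have e : TensorProduct.map f (ybOne k (C := C) (T := T)) =
      TensorProduct.map f (Algebra.linearMap k T) ∘ₗ
        LinearMap.lTensor C (CoalgebraStruct.counit (R := k)) := by
    rw [LinearMap.map_comp_lTensor]; rfl
  unfold ybConv
  rw [e, LinearMap.comp_assoc, hr]
  ext c
  simp [Algebra.algebraMap_eq_smul_one, TensorProduct.smul_tmul]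

theorem ybConv_inv_unique
    (hco : (TensorProduct.assoc k C C C).toLinearMap ∘ₗ
        LinearMap.rTensor C (CoalgebraStruct.comul (R := k)) ∘ₗ CoalgebraStruct.comul =
      LinearMap.lTensor C (CoalgebraStruct.comul (R := k)) ∘ₗ CoalgebraStruct.comul)
    (hl : LinearMap.rTensor C (CoalgebraStruct.counit (R := k)) ∘ₗ CoalgebraStruct.comul =
      TensorProduct.mk k k C 1)
    (hr : LinearMap.lTensor C (CoalgebraStruct.counit (R := k)) ∘ₗ CoalgebraStruct.comul =
      (TensorProduct.mk k C k).flip 1)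
    {f g h : C →ₗ[k] T} (hfg : ybConv k f g = ybOne k) (hhf : ybConv k h f = ybOne k) :
    h = g := by
  have h1 : ybConv k h (ybConv k f g) = ybConv k h (ybOne k) := by rw [hfg]
  rw [← ybConv_assoc k hco, hhf, ybConv_one k hr, ybOne_conv k hl] at h1
  exact h1.symm

end Conv

/-! ### Coalgebra structure lemmas for `A ⊗ A` -/

theorem ybTT_step1 :
    LinearMap.rTensor (A ⊗[k] A) (CoalgebraStruct.comul (R := k) (A := A ⊗[k] A)) ∘ₗ
        (TensorProduct.tensorTensorTensorComm k A A A A).toLinearMap =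
      (LinearMap.rTensor (A ⊗[k] A) (TensorProduct.tensorTensorTensorComm k A A A A).toLinearMap ∘ₗ
        (TensorProduct.tensorTensorTensorComm k (A ⊗[k] A) A (A ⊗[k] A) A).toLinearMap) ∘ₗ
        TensorProduct.map (LinearMap.rTensor A (comul (R := k)))
          (LinearMap.rTensor A (comul (R := k))) := by
  apply TensorProduct.ext_fourfold'
  intro p q r s
  simp [TensorProduct.comul_def, AlgebraTensorModule.tensorTensorTensorComm_eq]

theorem ybTT_step2 :
    LinearMap.lTensor (A ⊗[k] A) (CoalgebraStruct.comul (R := k) (A := A ⊗[k] A)) ∘ₗ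
        (TensorProduct.tensorTensorTensorComm k A A A A).toLinearMap =
      (LinearMap.lTensor (A ⊗[k] A) (TensorProduct.tensorTensorTensorComm k A A A A).toLinearMap ∘ₗ
        (TensorProduct.tensorTensorTensorComm k A (A ⊗[k] A) A (A ⊗[k] A)).toLinearMap) ∘ₗ
        TensorProduct.map (LinearMap.lTensor A (comul (R := k)))
          (LinearMap.lTensor A (comul (R := k))) := by
  apply TensorProduct.ext_fourfold'
  intro p q r s
  simp [TensorProduct.comul_def, AlgebraTensorModule.tensorTensorTensorComm_eq]

theorem ybTT_step3 :
    ((TensorProduct.assoc k (A ⊗[k] A) (A ⊗[k] A) (A ⊗[k] A)).toLinearMap ∘ₗ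
        LinearMap.rTensor (A ⊗[k] A) (TensorProduct.tensorTensorTensorComm k A A A A).toLinearMap ∘ₗ
        (TensorProduct.tensorTensorTensorComm k (A ⊗[k] A) A (A ⊗[k] A) A).toLinearMap) ∘ₗ
        TensorProduct.map (TensorProduct.assoc k A A A).symm.toLinearMap
          (TensorProduct.assoc k A A A).symm.toLinearMap =
      LinearMap.lTensor (A ⊗[k] A) (TensorProduct.tensorTensorTensorComm k A A A A).toLinearMap ∘ₗ
        (TensorProduct.tensorTensorTensorComm k A (A ⊗[k] A) A (A ⊗[k] A)).toLinearMap := by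
  apply TensorProduct.ext'
  intro u v
  induction u with
  | zero => simp
  | add u₁ u₂ h1 h2 => simp only [TensorProduct.add_tmul, map_add, h1, h2]
  | tmul p w =>
    induction v with
    | zero => simp
    | add v₁ v₂ h1 h2 => simp only [TensorProduct.tmul_add, map_add, h1, h2]
    | tmul r w' =>
      induction w with
      | zero => simp [TensorProduct.tmul_zero, TensorProduct.zero_tmul]
      | add w₁ w₂ h1 h2 =>
        simp only [TensorProduct.tmul_add, TensorProduct.add_tmul, map_add, h1, h2]
      | tmul q₁ q₂ =>
        induction w' with
        | zero => simp [TensorProduct.tmul_zero]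
        | add w₁ w₂ h1 h2 => simp only [TensorProduct.tmul_add, map_add, h1, h2]
        | tmul s₁ s₂ => simp

theorem ybTT_coassoc :
    (TensorProduct.assoc k (A ⊗[k] A) (A ⊗[k] A) (A ⊗[k] A)).toLinearMap ∘ₗ
        LinearMap.rTensor (A ⊗[k] A) (CoalgebraStruct.comul (R := k) (A := A ⊗[k] A)) ∘ₗ
        CoalgebraStruct.comul =
      LinearMap.lTensor (A ⊗[k] A) (CoalgebraStruct.comul (R := k) (A := A ⊗[k] A)) ∘ₗ
        CoalgebraStruct.comul := by
  have hΔc : CoalgebraStruct.comul (R := k) (A := A ⊗[k] A) =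
      (TensorProduct.tensorTensorTensorComm k A A A A).toLinearMap ∘ₗ
        TensorProduct.map (comul (R := k)) (comul (R := k)) := by
    rw [TensorProduct.comul_def]; rfl
  have hco : LinearMap.rTensor A (comul (R := k) (A := A)) ∘ₗ comul =
      (TensorProduct.assoc k A A A).symm.toLinearMap ∘ₗ
        LinearMap.lTensor A (comul (R := k)) ∘ₗ comul := by
    rw [Coalgebra.coassoc_symm]
  calc (TensorProduct.assoc k (A ⊗[k] A) (A ⊗[k] A) (A ⊗[k] A)).toLinearMap ∘ₗ
        LinearMap.rTensor (A ⊗[k] A) (CoalgebraStruct.comul (R := k) (A := A ⊗[k] A)) ∘ₗ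
        CoalgebraStruct.comul
      = (TensorProduct.assoc k (A ⊗[k] A) (A ⊗[k] A) (A ⊗[k] A)).toLinearMap ∘ₗ
        (LinearMap.rTensor (A ⊗[k] A) (CoalgebraStruct.comul (R := k) (A := A ⊗[k] A)) ∘ₗ
          (TensorProduct.tensorTensorTensorComm k A A A A).toLinearMap) ∘ₗ
        TensorProduct.map (comul (R := k)) (comul (R := k)) := by
        rw [hΔc]; simp only [LinearMap.comp_assoc]
    _ = ((TensorProduct.assoc k (A ⊗[k] A) (A ⊗[k] A) (A ⊗[k] A)).toLinearMap ∘ₗ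
        LinearMap.rTensor (A ⊗[k] A) (TensorProduct.tensorTensorTensorComm k A A A A).toLinearMap ∘ₗ
        (TensorProduct.tensorTensorTensorComm k (A ⊗[k] A) A (A ⊗[k] A) A).toLinearMap) ∘ₗ
        TensorProduct.map (LinearMap.rTensor A (comul (R := k)) ∘ₗ comul)
          (LinearMap.rTensor A (comul (R := k)) ∘ₗ comul) := by
        rw [ybTT_step1]
        rw [TensorProduct.map_comp]
        simp only [LinearMap.comp_assoc]
    _ = (((TensorProduct.assoc k (A ⊗[k] A) (A ⊗[k] A) (A ⊗[k] A)).toLinearMap ∘ₗ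
        LinearMap.rTensor (A ⊗[k] A) (TensorProduct.tensorTensorTensorComm k A A A A).toLinearMap ∘ₗ
        (TensorProduct.tensorTensorTensorComm k (A ⊗[k] A) A (A ⊗[k] A) A).toLinearMap) ∘ₗ
        TensorProduct.map (TensorProduct.assoc k A A A).symm.toLinearMap
          (TensorProduct.assoc k A A A).symm.toLinearMap) ∘ₗ
        TensorProduct.map (LinearMap.lTensor A (comul (R := k)) ∘ₗ comul)
          (LinearMap.lTensor A (comul (R := k)) ∘ₗ comul) := by
        rw [hco, TensorProduct.map_comp]
        simp only [LinearMap.comp_assoc]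
    _ = (LinearMap.lTensor (A ⊗[k] A) (TensorProduct.tensorTensorTensorComm k A A A A).toLinearMap ∘ₗ
        (TensorProduct.tensorTensorTensorComm k A (A ⊗[k] A) A (A ⊗[k] A)).toLinearMap) ∘ₗ
        TensorProduct.map (LinearMap.lTensor A (comul (R := k)) ∘ₗ comul)
          (LinearMap.lTensor A (comul (R := k)) ∘ₗ comul) := by
        rw [ybTT_step3]
    _ = LinearMap.lTensor (A ⊗[k] A) (CoalgebraStruct.comul (R := k) (A := A ⊗[k] A)) ∘ₗ
        CoalgebraStruct.comul := by
        have step2' := ybTT_step2 k A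
        rw [hΔc] at step2' ⊢
        rw [TensorProduct.map_comp, ← LinearMap.comp_assoc, ← step2']
        simp only [LinearMap.comp_assoc]

theorem ybTT_structural_l :
    LinearMap.rTensor (A ⊗[k] A) (CoalgebraStruct.counit (R := k) (A := A ⊗[k] A)) ∘ₗ
        (TensorProduct.tensorTensorTensorComm k A A A A).toLinearMap =
      (TensorProduct.map (LinearMap.mul' k k) LinearMap.id ∘ₗ
        (TensorProduct.tensorTensorTensorComm k k A k A).toLinearMap) ∘ₗ
        TensorProduct.map (LinearMap.rTensor A (counit (R := k))) (LinearMap.rTensor A counit) := by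
  apply TensorProduct.ext_fourfold'
  intro p q r s
  simp [TensorProduct.counit_def, mul_comm]

theorem ybTT_counit_l :
    LinearMap.rTensor (A ⊗[k] A) (CoalgebraStruct.counit (R := k) (A := A ⊗[k] A)) ∘ₗ
        CoalgebraStruct.comul = TensorProduct.mk k k (A ⊗[k] A) 1 := by
  apply TensorProduct.ext'
  intro a b
  have h1 : CoalgebraStruct.comul (R := k) (A := A ⊗[k] A) (a ⊗ₜ[k] b) =
      (TensorProduct.tensorTensorTensorComm k A A A A)
        ((comul (R := k) a) ⊗ₜ[k] (comul (R := k) b)) := by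
    rw [TensorProduct.comul_def]; rfl
  have h2 := congr($(ybTT_structural_l k A) ((comul (R := k) a) ⊗ₜ[k] (comul (R := k) b)))
  simp only [LinearMap.comp_apply, TensorProduct.map_tmul, LinearEquiv.coe_coe] at h2 ⊢
  rw [h1, h2]
  simp [Coalgebra.rTensor_counit_comul]

theorem ybTT_structural_r :
    LinearMap.lTensor (A ⊗[k] A) (CoalgebraStruct.counit (R := k) (A := A ⊗[k] A)) ∘ₗ
        (TensorProduct.tensorTensorTensorComm k A A A A).toLinearMap =
      (TensorProduct.map LinearMap.id (LinearMap.mul' k k) ∘ₗ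
        (TensorProduct.tensorTensorTensorComm k A k A k).toLinearMap) ∘ₗ
        TensorProduct.map (LinearMap.lTensor A (counit (R := k))) (LinearMap.lTensor A counit) := by
  apply TensorProduct.ext_fourfold'
  intro p q r s
  simp [TensorProduct.counit_def, mul_comm]

theorem ybTT_counit_r :
    LinearMap.lTensor (A ⊗[k] A) (CoalgebraStruct.counit (R := k) (A := A ⊗[k] A)) ∘ₗ
        CoalgebraStruct.comul = (TensorProduct.mk k (A ⊗[k] A) k).flip 1 := by
  apply TensorProduct.ext'
  intro a b
  have h1 : CoalgebraStruct.comul (R := k) (A := A ⊗[k] A) (a ⊗ₜ[k] b) =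
      (TensorProduct.tensorTensorTensorComm k A A A A)
        ((comul (R := k) a) ⊗ₜ[k] (comul (R := k) b)) := by
    rw [TensorProduct.comul_def]; rfl
  have h2 := congr($(ybTT_structural_r k A) ((comul (R := k) a) ⊗ₜ[k] (comul (R := k) b)))
  simp only [LinearMap.comp_apply, TensorProduct.map_tmul, LinearEquiv.coe_coe] at h2 ⊢
  rw [h1, h2]
  simp [Coalgebra.lTensor_counit_comul]

/-! ### Basic maps -/

/-- `x ↦ 1 ⊗ x`. -/
noncomputable def ybι : A →ₗ[k] A ⊗[k] A := TensorProduct.mk k A A 1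

/-- `x ↦ x ⊗ 1`. -/
noncomputable def ybκ : A →ₗ[k] A ⊗[k] A := (TensorProduct.mk k A A).flip 1

@[simp] theorem ybι_apply (x : A) : ybι k A x = (1 : A) ⊗ₜ[k] x := rfl
@[simp] theorem ybκ_apply (x : A) : ybκ k A x = x ⊗ₜ[k] (1 : A) := rfl

/-- The adjoint coaction `a ↦ a⁽²⁾ ⊗ S(a⁽¹⁾)·a⁽³⁾`. -/
noncomputable def ybDelta : A →ₗ[k] A ⊗[k] A :=
  gAux k A ∘ₗ rTensor (A ⊗[k] A) (HopfAlgebra.antipode (R := k)) ∘ₗ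
    (lTensor A (comul (R := k) (A := A)) ∘ₗ comul)

theorem gAux_tmul (x y z : A) :
    gAux k A (x ⊗ₜ[k] (y ⊗ₜ[k] z)) = y ⊗ₜ[k] (x * z) := by
  simp [gAux]

theorem gAux_mul (x : A) (t : A ⊗[k] A) :
    gAux k A (x ⊗ₜ[k] t) = ((1 : A) ⊗ₜ[k] x) * t := by
  induction t with
  | zero => simp [TensorProduct.tmul_zero]
  | tmul y z => rw [gAux_tmul, Algebra.TensorProduct.tmul_mul_tmul, one_mul]
  | add s t hs ht => rw [TensorProduct.tmul_add, map_add, hs, ht, mul_add]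

theorem Rmap_eq : Rmap k A = gAux k A ∘ₗ lTensor A (ybDelta k A) := by
  rw [Rmap, ybDelta]
  simp only [lTensor_comp, LinearMap.comp_assoc]

theorem Rmap_tmul (x y : A) :
    Rmap k A (x ⊗ₜ[k] y) = ((1 : A) ⊗ₜ[k] x) * ybDelta k A y := by
  rw [Rmap_eq]
  simp only [LinearMap.comp_apply, lTensor_tmul]
  exact gAux_mul k A x _

theorem ybDelta_conv :
    ybDelta k A = ybConv k (ybι k A ∘ₗ HopfAlgebra.antipode (R := k)) (comul (R := k)) := by
  have e : TensorProduct.map (ybι k A ∘ₗ HopfAlgebra.antipode (R := k)) (comul (R := k)) =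
      LinearMap.rTensor (A ⊗[k] A) (ybι k A ∘ₗ HopfAlgebra.antipode (R := k)) ∘ₗ
        LinearMap.lTensor A (comul (R := k)) := by
    rw [LinearMap.rTensor_comp_lTensor]
  have key : gAux k A ∘ₗ LinearMap.rTensor (A ⊗[k] A) (HopfAlgebra.antipode (R := k)) =
      LinearMap.mul' k (A ⊗[k] A) ∘ₗ
        LinearMap.rTensor (A ⊗[k] A) (ybι k A ∘ₗ HopfAlgebra.antipode (R := k)) := by
    apply TensorProduct.ext'
    intro x t
    simp only [LinearMap.comp_apply, LinearMap.rTensor_tmul, LinearMap.mul'_apply,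
      ybι_apply]
    exact gAux_mul k A _ t
  rw [ybConv, e, ybDelta]
  simp only [← LinearMap.comp_assoc]
  rw [key]

/-! ### Derived Hopf algebra identities -/

/-- Multiplicativity of `map f g` followed by multiplication, for multiplicative `f`, `g`. -/
theorem yb_mulmap_mult {M N T' : Type*} [CommRing M] [Algebra k M] [CommRing N] [Algebra k N]
    [CommRing T'] [Algebra k T'] (f : M →ₗ[k] T') (g : N →ₗ[k] T')
    (hf : ∀ x y : M, f (x * y) = f x * f y) (hg : ∀ x y : N, g (x * y) = g x * g y)
    (s t : M ⊗[k] N) :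
    (LinearMap.mul' k T' ∘ₗ TensorProduct.map f g) (s * t) =
      (LinearMap.mul' k T' ∘ₗ TensorProduct.map f g) s *
        (LinearMap.mul' k T' ∘ₗ TensorProduct.map f g) t := by
  induction s with
  | zero => simp
  | add s₁ s₂ h1 h2 => simp only [add_mul, map_add, h1, h2]
  | tmul p q =>
    induction t with
    | zero => simp
    | add t₁ t₂ h1 h2 => simp only [mul_add, map_add, h1, h2]
    | tmul r u =>
      simp only [Algebra.TensorProduct.tmul_mul_tmul, LinearMap.comp_apply,
        TensorProduct.map_tmul, LinearMap.mul'_apply, hf, hg]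
      ring

/-- Multiplicativity of `map f g` for multiplicative `f`, `g`. -/
theorem yb_map_mult {M N M' N' : Type*} [CommRing M] [Algebra k M] [CommRing N] [Algebra k N]
    [CommRing M'] [Algebra k M'] [CommRing N'] [Algebra k N'] (f : M →ₗ[k] M') (g : N →ₗ[k] N')
    (hf : ∀ x y : M, f (x * y) = f x * f y) (hg : ∀ x y : N, g (x * y) = g x * g y)
    (s t : M ⊗[k] N) :
    TensorProduct.map f g (s * t) = TensorProduct.map f g s * TensorProduct.map f g t := by
  induction s with
  | zero => simp
  | add s₁ s₂ h1 h2 => simp only [add_mul, map_add, h1, h2]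
  | tmul p q =>
    induction t with
    | zero => simp
    | add t₁ t₂ h1 h2 => simp only [mul_add, map_add, h1, h2]
    | tmul r u =>
      simp only [Algebra.TensorProduct.tmul_mul_tmul, TensorProduct.map_tmul, hf, hg]

/-- A multiplicative linear map intertwines the multiplication maps. -/
theorem yb_mul_hom {M T' : Type*} [CommRing M] [Algebra k M] [CommRing T'] [Algebra k T']
    (φ : M →ₗ[k] T') (hφ : ∀ x y : M, φ (x * y) = φ x * φ y) :
    φ ∘ₗ LinearMap.mul' k M = LinearMap.mul' k T' ∘ₗ TensorProduct.map φ φ := by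
  apply TensorProduct.ext'
  intro s t
  simp [hφ]

theorem yb_epsm :
    counit (R := k) (A := A) ∘ₗ LinearMap.mul' k A =
      CoalgebraStruct.counit (R := k) (A := A ⊗[k] A) := by
  apply TensorProduct.ext'
  intro a b
  simp [TensorProduct.counit_def, mul_comm]

theorem yb_mul2 :
    LinearMap.mul' k (A ⊗[k] A) =
      TensorProduct.map (LinearMap.mul' k A) (LinearMap.mul' k A) ∘ₗ
        (TensorProduct.tensorTensorTensorComm k A A A A).toLinearMap := by
  apply TensorProduct.ext_fourfold'
  intro p q r s
  simp [Algebra.TensorProduct.tmul_mul_tmul]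

theorem yb_mulcomp :
    TensorProduct.map (LinearMap.mul' k A) (LinearMap.mul' k A) ∘ₗ
        CoalgebraStruct.comul (R := k) (A := A ⊗[k] A) =
      comul (R := k) ∘ₗ LinearMap.mul' k A := by
  apply TensorProduct.ext'
  intro a b
  have h1 : CoalgebraStruct.comul (R := k) (A := A ⊗[k] A) (a ⊗ₜ[k] b) =
      (TensorProduct.tensorTensorTensorComm k A A A A)
        ((comul (R := k) a) ⊗ₜ[k] (comul (R := k) b)) := by
    rw [TensorProduct.comul_def]; rfl
  have h2 : TensorProduct.map (LinearMap.mul' k A) (LinearMap.mul' k A)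
        ((TensorProduct.tensorTensorTensorComm k A A A A)
          ((comul (R := k) a) ⊗ₜ[k] (comul (R := k) b))) =
      LinearMap.mul' k (A ⊗[k] A) ((comul (R := k) a) ⊗ₜ[k] (comul (R := k) b)) := by
    rw [yb_mul2]; rfl
  simp only [LinearMap.comp_apply, h1, h2, LinearMap.mul'_apply]
  rw [← Bialgebra.comul_mul]

theorem yb_antipode_one : HopfAlgebra.antipode (R := k) (1 : A) = 1 := by
  have h := HopfAlgebra.mul_antipode_rTensor_comul_apply (R := k) (A := A) (a := 1)
  rw [Bialgebra.comul_one, Algebra.TensorProduct.one_def] at h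
  simpa using h

theorem yb_antipode_mul_map :
    HopfAlgebra.antipode (R := k) ∘ₗ LinearMap.mul' k A =
      LinearMap.mul' k A ∘ₗ
        TensorProduct.map (HopfAlgebra.antipode (R := k)) (HopfAlgebra.antipode (R := k)) := by
  set S := HopfAlgebra.antipode (R := k) (A := A) with hS
  -- left convolution inverse property
  have hHF : ybConv k (S ∘ₗ LinearMap.mul' k A) (LinearMap.mul' k A) = ybOne k := by
    unfold ybConv
    rw [show TensorProduct.map (S ∘ₗ LinearMap.mul' k A) (LinearMap.mul' k A) =
        LinearMap.rTensor A S ∘ₗ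
          TensorProduct.map (LinearMap.mul' k A) (LinearMap.mul' k A) by
      rw [LinearMap.rTensor_comp_map]]
    rw [LinearMap.comp_assoc, yb_mulcomp]
    rw [show LinearMap.mul' k A ∘ₗ LinearMap.rTensor A S ∘ₗ comul (R := k) ∘ₗ LinearMap.mul' k A =
        (LinearMap.mul' k A ∘ₗ LinearMap.rTensor A S ∘ₗ comul (R := k)) ∘ₗ LinearMap.mul' k A by
      simp only [LinearMap.comp_assoc]]
    rw [HopfAlgebra.mul_antipode_rTensor_comul]
    rw [ybOne, ← yb_epsm]
    simp only [LinearMap.comp_assoc]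
  -- right convolution inverse property
  have hFG : ybConv k (LinearMap.mul' k A)
      (LinearMap.mul' k A ∘ₗ TensorProduct.map S S) = ybOne k := by
    unfold ybConv
    have hstr : LinearMap.mul' k A ∘ₗ
        TensorProduct.map (LinearMap.mul' k A) (LinearMap.mul' k A ∘ₗ TensorProduct.map S S) ∘ₗ
        (TensorProduct.tensorTensorTensorComm k A A A A).toLinearMap =
      LinearMap.mul' k A ∘ₗ
        TensorProduct.map (LinearMap.mul' k A ∘ₗ LinearMap.lTensor A S)
          (LinearMap.mul' k A ∘ₗ LinearMap.lTensor A S) := by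
      apply TensorProduct.ext_fourfold'
      intro p q r s
      simp only [LinearMap.comp_apply, LinearEquiv.coe_coe,
        TensorProduct.tensorTensorTensorComm_tmul, TensorProduct.map_tmul,
        LinearMap.mul'_apply, LinearMap.lTensor_tmul]
      ring
    have hΔc : CoalgebraStruct.comul (R := k) (A := A ⊗[k] A) =
        (TensorProduct.tensorTensorTensorComm k A A A A).toLinearMap ∘ₗ
          TensorProduct.map (comul (R := k)) (comul (R := k)) := by
      rw [TensorProduct.comul_def]; rfl
    rw [hΔc]
    simp only [← LinearMap.comp_assoc] at hstr ⊢
    rw [hstr]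
    simp only [LinearMap.comp_assoc, ← TensorProduct.map_comp]
    rw [HopfAlgebra.mul_antipode_lTensor_comul]
    apply TensorProduct.ext'
    intro a b
    simp [TensorProduct.counit_def, mul_comm, ybOne, Algebra.TensorProduct.tmul_mul_tmul,
      ← map_mul]
  exact ybConv_inv_unique k (ybTT_coassoc k A) (ybTT_counit_l k A) (ybTT_counit_r k A) hFG hHF

theorem yb_antipode_mul (a b : A) :
    HopfAlgebra.antipode (R := k) (a * b) =
      HopfAlgebra.antipode (R := k) a * HopfAlgebra.antipode (R := k) b := by
  have h := congr($(yb_antipode_mul_map k A) (a ⊗ₜ[k] b))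
  simpa using h

theorem yb_comul_antipode :
    comul (R := k) (A := A) ∘ₗ HopfAlgebra.antipode (R := k) =
      (TensorProduct.comm k A A).toLinearMap ∘ₗ
        TensorProduct.map (HopfAlgebra.antipode (R := k)) (HopfAlgebra.antipode (R := k)) ∘ₗ
        comul := by
  have hco := Coalgebra.coassoc (R := k) (A := A)
  have hl := Coalgebra.rTensor_counit_comp_comul (R := k) (A := A)
  have hr := Coalgebra.lTensor_counit_comp_comul (R := k) (A := A)
  -- `comul` as a convolution product
  have h1 : ybConv k (ybκ k A) (ybι k A) = comul (R := k) (A := A) := by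
    have hmerge : LinearMap.mul' k (A ⊗[k] A) ∘ₗ TensorProduct.map (ybκ k A) (ybι k A) =
        LinearMap.id := by
      apply TensorProduct.ext'
      intro x y
      simp [Algebra.TensorProduct.tmul_mul_tmul]
    unfold ybConv
    rw [← LinearMap.comp_assoc, hmerge, LinearMap.id_comp]
  -- the candidate inverse as a convolution product
  have h2 : ybConv k (ybι k A ∘ₗ HopfAlgebra.antipode (R := k))
      (ybκ k A ∘ₗ HopfAlgebra.antipode (R := k)) =
      (TensorProduct.comm k A A).toLinearMap ∘ₗ
        TensorProduct.map (HopfAlgebra.antipode (R := k)) (HopfAlgebra.antipode (R := k)) ∘ₗ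
        comul := by
    have hmerge : LinearMap.mul' k (A ⊗[k] A) ∘ₗ
        TensorProduct.map (ybι k A ∘ₗ HopfAlgebra.antipode (R := k))
          (ybκ k A ∘ₗ HopfAlgebra.antipode (R := k)) =
        (TensorProduct.comm k A A).toLinearMap ∘ₗ
          TensorProduct.map (HopfAlgebra.antipode (R := k)) (HopfAlgebra.antipode (R := k)) := by
      apply TensorProduct.ext'
      intro x y
      simp [Algebra.TensorProduct.tmul_mul_tmul]
    unfold ybConv
    rw [← LinearMap.comp_assoc, hmerge, LinearMap.comp_assoc]
  have h3 : ybConv k (ybκ k A ∘ₗ HopfAlgebra.antipode (R := k)) (ybκ k A) = ybOne k := by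
    have hmerge : TensorProduct.map (ybκ k A ∘ₗ HopfAlgebra.antipode (R := k)) (ybκ k A) =
        (TensorProduct.map (ybκ k A) (ybκ k A)) ∘ₗ
          LinearMap.rTensor A (HopfAlgebra.antipode (R := k)) := by
      rw [LinearMap.map_comp_rTensor]
    have hκκ : LinearMap.mul' k (A ⊗[k] A) ∘ₗ TensorProduct.map (ybκ k A) (ybκ k A) =
        ybκ k A ∘ₗ LinearMap.mul' k A := by
      apply TensorProduct.ext'
      intro x y
      simp [Algebra.TensorProduct.tmul_mul_tmul]
    unfold ybConv
    rw [hmerge, ← LinearMap.comp_assoc, ← LinearMap.comp_assoc, hκκ]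
    simp only [LinearMap.comp_assoc]
    rw [HopfAlgebra.mul_antipode_rTensor_comul]
    ext a
    simp [ybOne, Algebra.TensorProduct.algebraMap_apply, Algebra.TensorProduct.one_def]
  have h4 : ybConv k (ybι k A ∘ₗ HopfAlgebra.antipode (R := k)) (ybι k A) = ybOne k := by
    have hmerge : TensorProduct.map (ybι k A ∘ₗ HopfAlgebra.antipode (R := k)) (ybι k A) =
        (TensorProduct.map (ybι k A) (ybι k A)) ∘ₗ
          LinearMap.rTensor A (HopfAlgebra.antipode (R := k)) := by
      rw [LinearMap.map_comp_rTensor]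
    have hιι : LinearMap.mul' k (A ⊗[k] A) ∘ₗ TensorProduct.map (ybι k A) (ybι k A) =
        ybι k A ∘ₗ LinearMap.mul' k A := by
      apply TensorProduct.ext'
      intro x y
      simp [Algebra.TensorProduct.tmul_mul_tmul]
    unfold ybConv
    rw [hmerge, ← LinearMap.comp_assoc, ← LinearMap.comp_assoc, hιι]
    simp only [LinearMap.comp_assoc]
    rw [HopfAlgebra.mul_antipode_rTensor_comul]
    ext a
    simp [ybOne, Algebra.TensorProduct.algebraMap_apply, Algebra.TensorProduct.one_def,
      TensorProduct.tmul_smul, TensorProduct.smul_tmul', Algebra.algebraMap_eq_smul_one]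
  have h5 : ybConv k (comul (R := k) (A := A))
      (comul (R := k) ∘ₗ HopfAlgebra.antipode (R := k)) = ybOne k := by
    have hmerge : TensorProduct.map (comul (R := k) (A := A))
        (comul (R := k) ∘ₗ HopfAlgebra.antipode (R := k)) =
        (TensorProduct.map (comul (R := k) (A := A)) (comul (R := k) (A := A))) ∘ₗ
          LinearMap.lTensor A (HopfAlgebra.antipode (R := k)) := by
      rw [LinearMap.map_comp_lTensor]
    have hΔΔ : LinearMap.mul' k (A ⊗[k] A) ∘ₗ
        TensorProduct.map (comul (R := k) (A := A)) (comul (R := k) (A := A)) =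
        comul (R := k) (A := A) ∘ₗ LinearMap.mul' k A :=
      (yb_mul_hom k (comul (R := k) (A := A)) fun x y => Bialgebra.comul_mul x y).symm
    unfold ybConv
    rw [hmerge, ← LinearMap.comp_assoc, ← LinearMap.comp_assoc, hΔΔ]
    simp only [LinearMap.comp_assoc]
    rw [HopfAlgebra.mul_antipode_lTensor_comul]
    ext a
    simp [ybOne]
  -- left-inverse property of the candidate
  have hGF : ybConv k (ybConv k (ybι k A ∘ₗ HopfAlgebra.antipode (R := k))
      (ybκ k A ∘ₗ HopfAlgebra.antipode (R := k))) (comul (R := k) (A := A)) = ybOne k := by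
    rw [← h1]
    rw [ybConv_assoc k hco]
    rw [← ybConv_assoc k hco (ybκ k A ∘ₗ HopfAlgebra.antipode (R := k))]
    rw [h3, ybOne_conv k hl, h4]
  have huniq := ybConv_inv_unique k hco hl hr h5 hGF
  exact huniq.symm.trans h2

theorem ybDelta_one : ybDelta k A 1 = 1 := by
  rw [ybDelta_conv]
  show (LinearMap.mul' k (A ⊗[k] A))
    (TensorProduct.map (ybι k A ∘ₗ HopfAlgebra.antipode (R := k)) (comul (R := k))
      (comul (R := k) (1 : A))) = 1
  rw [Bialgebra.comul_one, Algebra.TensorProduct.one_def]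
  simp [yb_antipode_one, Algebra.TensorProduct.one_def]

theorem ybDelta_mul (a b : A) : ybDelta k A (a * b) = ybDelta k A a * ybDelta k A b := by
  rw [ybDelta_conv]
  show (LinearMap.mul' k (A ⊗[k] A) ∘ₗ
      TensorProduct.map (ybι k A ∘ₗ HopfAlgebra.antipode (R := k)) (comul (R := k)))
      (comul (R := k) ((a * b : A))) = _
  rw [Bialgebra.comul_mul]
  rw [yb_mulmap_mult k (ybι k A ∘ₗ HopfAlgebra.antipode (R := k)) (comul (R := k) (A := A))
    (fun x y => by simp [yb_antipode_mul, Algebra.TensorProduct.tmul_mul_tmul])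
    (fun x y => Bialgebra.comul_mul x y)]
  rfl

/-! ### The three main structural lemmas -/

theorem yb_Rmap2 :
    Rmap k A = LinearMap.mul' k (A ⊗[k] A) ∘ₗ TensorProduct.map (ybι k A) (ybDelta k A) := by
  apply TensorProduct.ext'
  intro x y
  simp only [LinearMap.comp_apply, TensorProduct.map_tmul, LinearMap.mul'_apply, ybι_apply]
  exact Rmap_tmul k A x y

theorem yb_Rmap_comp_comul : Rmap k A ∘ₗ comul (R := k) = comul (R := k) := by
  have hco := Coalgebra.coassoc (R := k) (A := A)
  have hl := Coalgebra.rTensor_counit_comp_comul (R := k) (A := A)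
  have key : Rmap k A ∘ₗ comul (R := k) = ybConv k (ybι k A) (ybDelta k A) := by
    rw [yb_Rmap2]; rfl
  have hι : ybConv k (ybι k A) (ybι k A ∘ₗ HopfAlgebra.antipode (R := k)) = ybOne k := by
    have hmerge : TensorProduct.map (ybι k A) (ybι k A ∘ₗ HopfAlgebra.antipode (R := k)) =
        (TensorProduct.map (ybι k A) (ybι k A)) ∘ₗ
          LinearMap.lTensor A (HopfAlgebra.antipode (R := k)) := by
      rw [LinearMap.map_comp_lTensor]
    have hιι : LinearMap.mul' k (A ⊗[k] A) ∘ₗ TensorProduct.map (ybι k A) (ybι k A) =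
        ybι k A ∘ₗ LinearMap.mul' k A := by
      apply TensorProduct.ext'
      intro x y
      simp [Algebra.TensorProduct.tmul_mul_tmul]
    unfold ybConv
    rw [hmerge, ← LinearMap.comp_assoc, ← LinearMap.comp_assoc, hιι]
    simp only [LinearMap.comp_assoc]
    rw [HopfAlgebra.mul_antipode_lTensor_comul]
    ext a
    simp [ybOne, Algebra.TensorProduct.algebraMap_apply, Algebra.TensorProduct.one_def,
      TensorProduct.tmul_smul, TensorProduct.smul_tmul', Algebra.algebraMap_eq_smul_one]
  rw [key, ybDelta_conv, ← ybConv_assoc k hco, hι, ybOne_conv k hl]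

/-- `t ↦ 1 ⊗ t : A ⊗ A → A ⊗ (A ⊗ A)`. -/
noncomputable def ybIota' : A ⊗[k] A →ₗ[k] A ⊗[k] (A ⊗[k] A) :=
  TensorProduct.mk k A (A ⊗[k] A) 1

/-- `x ⊗ y ↦ x ⊗ (y ⊗ 1)`. -/
noncomputable def ybP12 : A ⊗[k] A →ₗ[k] A ⊗[k] (A ⊗[k] A) :=
  lTensor A (ybκ k A)

/-- First leg embedding of `A` in `A ⊗ (A ⊗ A)`. -/
noncomputable def ybe1 : A →ₗ[k] A ⊗[k] (A ⊗[k] A) :=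
  (TensorProduct.mk k A (A ⊗[k] A)).flip 1

/-- Second leg embedding. -/
noncomputable def ybe2 : A →ₗ[k] A ⊗[k] (A ⊗[k] A) :=
  ybIota' k A ∘ₗ ybκ k A

/-- Third leg embedding. -/
noncomputable def ybe3 : A →ₗ[k] A ⊗[k] (A ⊗[k] A) :=
  ybIota' k A ∘ₗ ybι k A

@[simp] theorem ybIota'_apply (t : A ⊗[k] A) : ybIota' k A t = (1 : A) ⊗ₜ[k] t := rfl
@[simp] theorem ybP12_apply (x y : A) : ybP12 k A (x ⊗ₜ[k] y) = x ⊗ₜ[k] (y ⊗ₜ[k] (1 : A)) := rfl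
@[simp] theorem ybe1_apply (x : A) : ybe1 k A x = x ⊗ₜ[k] ((1 : A) ⊗ₜ[k] (1 : A)) := by
  simp [ybe1, Algebra.TensorProduct.one_def]
@[simp] theorem ybe2_apply (x : A) : ybe2 k A x = (1 : A) ⊗ₜ[k] (x ⊗ₜ[k] (1 : A)) := rfl
@[simp] theorem ybe3_apply (x : A) : ybe3 k A x = (1 : A) ⊗ₜ[k] ((1 : A) ⊗ₜ[k] x) := rfl

theorem ybe1_one : ybe1 k A 1 = 1 := by
  rw [ybe1_apply, Algebra.TensorProduct.one_def, Algebra.TensorProduct.one_def]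

theorem yb_coaction :
    (TensorProduct.assoc k A A A).toLinearMap ∘ₗ rTensor A (ybDelta k A) ∘ₗ ybDelta k A =
      lTensor A (comul (R := k)) ∘ₗ ybDelta k A := by
  have hco := Coalgebra.coassoc (R := k) (A := A)
  have hl := Coalgebra.rTensor_counit_comp_comul (R := k) (A := A)
  set S : A →ₗ[k] A := HopfAlgebra.antipode (R := k) with hSdef
  set a' : A →ₗ[k] A ⊗[k] (A ⊗[k] A) := ybe3 k A ∘ₗ S with ha'
  set b' : A →ₗ[k] A ⊗[k] (A ⊗[k] A) := ybe2 k A ∘ₗ S with hb'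
  -- multiplicativity facts
  have hκmult : ∀ x y : A, ybκ k A (x * y) = ybκ k A x * ybκ k A y := by
    intro x y; simp [Algebra.TensorProduct.tmul_mul_tmul]
  have hP12mult : ∀ s t : A ⊗[k] A, ybP12 k A (s * t) = ybP12 k A s * ybP12 k A t := by
    intro s t
    have : ybP12 k A = TensorProduct.map LinearMap.id (ybκ k A) := rfl
    rw [this]
    exact yb_map_mult k _ _ (fun _ _ => rfl) hκmult s t
  have he3mult : ∀ x y : A, ybe3 k A (x * y) = ybe3 k A x * ybe3 k A y := by
    intro x y; simp [Algebra.TensorProduct.tmul_mul_tmul]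
  have hfmult : ∀ x y : A, (ybP12 k A ∘ₗ ybDelta k A) (x * y) =
      (ybP12 k A ∘ₗ ybDelta k A) x * (ybP12 k A ∘ₗ ybDelta k A) y := by
    intro x y
    simp only [LinearMap.comp_apply, ybDelta_mul, hP12mult]
  -- Ψ as multiplication composite
  have hΨ : (TensorProduct.assoc k A A A).toLinearMap ∘ₗ rTensor A (ybDelta k A) =
      LinearMap.mul' k (A ⊗[k] (A ⊗[k] A)) ∘ₗ
        TensorProduct.map (ybP12 k A ∘ₗ ybDelta k A) (ybe3 k A) := by
    apply TensorProduct.ext'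
    intro x y
    simp only [LinearMap.comp_apply, LinearMap.rTensor_tmul, TensorProduct.map_tmul,
      LinearMap.mul'_apply, LinearEquiv.coe_coe]
    generalize ybDelta k A x = t
    induction t with
    | zero => simp
    | add t₁ t₂ h1 h2 => simp only [TensorProduct.add_tmul, map_add, add_mul, h1, h2]
    | tmul p q =>
      simp [Algebra.TensorProduct.tmul_mul_tmul]
  have hΨmult : ∀ s t : A ⊗[k] A,
      ((TensorProduct.assoc k A A A).toLinearMap ∘ₗ rTensor A (ybDelta k A)) (s * t) =
        ((TensorProduct.assoc k A A A).toLinearMap ∘ₗ rTensor A (ybDelta k A)) s *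
          ((TensorProduct.assoc k A A A).toLinearMap ∘ₗ rTensor A (ybDelta k A)) t := by
    intro s t
    rw [hΨ]
    exact yb_mulmap_mult k _ _ hfmult he3mult s t
  -- expand LHS as a convolution
  have conv_expand : ∀ (φ : A ⊗[k] A →ₗ[k] A ⊗[k] (A ⊗[k] A))
      (hφ : ∀ s t : A ⊗[k] A, φ (s * t) = φ s * φ t),
      φ ∘ₗ ybDelta k A =
        ybConv k (φ ∘ₗ (ybι k A ∘ₗ S)) (φ ∘ₗ comul (R := k)) := by
    intro φ hφ
    rw [ybDelta_conv, ← hSdef]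
    show φ ∘ₗ LinearMap.mul' k (A ⊗[k] A) ∘ₗ
        TensorProduct.map (ybι k A ∘ₗ S) (comul (R := k)) ∘ₗ comul = _
    rw [show φ ∘ₗ LinearMap.mul' k (A ⊗[k] A) ∘ₗ
        TensorProduct.map (ybι k A ∘ₗ S) (comul (R := k)) ∘ₗ comul =
      (φ ∘ₗ LinearMap.mul' k (A ⊗[k] A)) ∘ₗ
        TensorProduct.map (ybι k A ∘ₗ S) (comul (R := k)) ∘ₗ comul by
      simp only [LinearMap.comp_assoc]]
    rw [yb_mul_hom k φ hφ]
    rw [ybConv]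
    rw [show (LinearMap.mul' k (A ⊗[k] (A ⊗[k] A)) ∘ₗ TensorProduct.map φ φ) ∘ₗ
        TensorProduct.map (ybι k A ∘ₗ S) (comul (R := k)) ∘ₗ comul =
      LinearMap.mul' k (A ⊗[k] (A ⊗[k] A)) ∘ₗ
        (TensorProduct.map φ φ ∘ₗ TensorProduct.map (ybι k A ∘ₗ S) (comul (R := k))) ∘ₗ
          comul by simp only [LinearMap.comp_assoc]]
    rw [← TensorProduct.map_comp]
  -- LHS computation
  have hΨι : ((TensorProduct.assoc k A A A).toLinearMap ∘ₗ rTensor A (ybDelta k A)) ∘ₗ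
      (ybι k A ∘ₗ S) = a' := by
    ext x
    simp [ybDelta_one, Algebra.TensorProduct.one_def, ha']
  have hP12ι : ybP12 k A ∘ₗ (ybι k A ∘ₗ S) = b' := by
    ext x
    simp [hb']
  have hP12Δ : ybP12 k A ∘ₗ comul (R := k) = ybConv k (ybe1 k A) (ybe2 k A) := by
    have hmerge : LinearMap.mul' k (A ⊗[k] (A ⊗[k] A)) ∘ₗ
        TensorProduct.map (ybe1 k A) (ybe2 k A) = ybP12 k A := by
      apply TensorProduct.ext'
      intro x y
      simp [Algebra.TensorProduct.tmul_mul_tmul]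
    rw [ybConv, ← LinearMap.comp_assoc, hmerge]
  have hP12δ : ybP12 k A ∘ₗ ybDelta k A =
      ybConv k b' (ybConv k (ybe1 k A) (ybe2 k A)) := by
    rw [conv_expand (ybP12 k A) hP12mult, hP12ι, hP12Δ]
  have hΨΔ : ((TensorProduct.assoc k A A A).toLinearMap ∘ₗ rTensor A (ybDelta k A)) ∘ₗ
      comul (R := k) = ybConv k (ybP12 k A ∘ₗ ybDelta k A) (ybe3 k A) := by
    rw [hΨ]; rfl
  have hLHS : (TensorProduct.assoc k A A A).toLinearMap ∘ₗ rTensor A (ybDelta k A) ∘ₗ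
      ybDelta k A = ybConv k a'
        (ybConv k (ybConv k b' (ybConv k (ybe1 k A) (ybe2 k A))) (ybe3 k A)) := by
    rw [← LinearMap.comp_assoc]
    rw [conv_expand _ hΨmult, hΨι, hΨΔ, hP12δ]
  -- RHS computation
  have hlTmult : ∀ s t : A ⊗[k] A,
      lTensor A (comul (R := k) (A := A)) (s * t) =
        lTensor A (comul (R := k)) s * lTensor A (comul (R := k)) t := by
    intro s t
    have : lTensor A (comul (R := k) (A := A)) =
        TensorProduct.map LinearMap.id (comul (R := k)) := rfl
    rw [this]
    exact yb_map_mult k _ _ (fun _ _ => rfl) (fun x y => Bialgebra.comul_mul x y) s t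
  have hlι : lTensor A (comul (R := k) (A := A)) ∘ₗ (ybι k A ∘ₗ S) =
      ybIota' k A ∘ₗ (comul (R := k) ∘ₗ S) := by
    ext x
    simp
  have hG3 : ybIota' k A ∘ₗ (comul (R := k) ∘ₗ S) = ybConv k a' b' := by
    have hmerge : LinearMap.mul' k (A ⊗[k] (A ⊗[k] A)) ∘ₗ
        TensorProduct.map (ybe3 k A) (ybe2 k A) =
        ybIota' k A ∘ₗ (TensorProduct.comm k A A).toLinearMap := by
      apply TensorProduct.ext'
      intro x y
      simp [Algebra.TensorProduct.tmul_mul_tmul]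
    have hD4 : comul (R := k) (A := A) ∘ₗ S =
        (TensorProduct.comm k A A).toLinearMap ∘ₗ TensorProduct.map S S ∘ₗ comul := by
      rw [hSdef]; exact yb_comul_antipode k A
    rw [hD4, ybConv, ha', hb']
    rw [show TensorProduct.map (ybe3 k A ∘ₗ S) (ybe2 k A ∘ₗ S) =
        TensorProduct.map (ybe3 k A) (ybe2 k A) ∘ₗ TensorProduct.map S S from by
      rw [← TensorProduct.map_comp]]
    rw [show LinearMap.mul' k (A ⊗[k] (A ⊗[k] A)) ∘ₗ
        (TensorProduct.map (ybe3 k A) (ybe2 k A) ∘ₗ TensorProduct.map S S) ∘ₗ comul =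
      (LinearMap.mul' k (A ⊗[k] (A ⊗[k] A)) ∘ₗ TensorProduct.map (ybe3 k A) (ybe2 k A)) ∘ₗ
        TensorProduct.map S S ∘ₗ comul by simp only [LinearMap.comp_assoc]]
    rw [hmerge]
    simp only [LinearMap.comp_assoc]
  have h23 : ybConv k (ybe2 k A) (ybe3 k A) = ybIota' k A ∘ₗ comul (R := k) := by
    have hmerge : LinearMap.mul' k (A ⊗[k] (A ⊗[k] A)) ∘ₗ
        TensorProduct.map (ybe2 k A) (ybe3 k A) = ybIota' k A := by
      apply TensorProduct.ext'
      intro x y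
      simp [Algebra.TensorProduct.tmul_mul_tmul]
    rw [ybConv, ← LinearMap.comp_assoc, hmerge]
  have hlΔ : lTensor A (comul (R := k) (A := A)) ∘ₗ comul (R := k) =
      ybConv k (ybe1 k A) (ybConv k (ybe2 k A) (ybe3 k A)) := by
    rw [h23]
    have hmerge : LinearMap.mul' k (A ⊗[k] (A ⊗[k] A)) ∘ₗ
        TensorProduct.map (ybe1 k A) (ybIota' k A) =
        LinearMap.id (R := k) (M := A ⊗[k] (A ⊗[k] A)) := by
      apply TensorProduct.ext'
      intro x t
      simp [Algebra.TensorProduct.tmul_mul_tmul, ← Algebra.TensorProduct.one_def]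
    rw [ybConv]
    rw [show TensorProduct.map (ybe1 k A) (ybIota' k A ∘ₗ comul (R := k)) =
        TensorProduct.map (ybe1 k A) (ybIota' k A) ∘ₗ lTensor A (comul (R := k)) from by
      rw [LinearMap.map_comp_lTensor]]
    rw [show LinearMap.mul' k (A ⊗[k] (A ⊗[k] A)) ∘ₗ
        (TensorProduct.map (ybe1 k A) (ybIota' k A) ∘ₗ lTensor A (comul (R := k))) ∘ₗ comul =
      (LinearMap.mul' k (A ⊗[k] (A ⊗[k] A)) ∘ₗ TensorProduct.map (ybe1 k A) (ybIota' k A)) ∘ₗ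
        lTensor A (comul (R := k)) ∘ₗ comul by simp only [LinearMap.comp_assoc]]
    rw [hmerge, LinearMap.id_comp]
  have hRHS : lTensor A (comul (R := k)) ∘ₗ ybDelta k A =
      ybConv k (ybConv k a' b') (ybConv k (ybe1 k A) (ybConv k (ybe2 k A) (ybe3 k A))) := by
    rw [conv_expand _ hlTmult, hlι, hG3, hlΔ]
  rw [hLHS, hRHS]
  rw [ybConv_assoc k hco b' (ybConv k (ybe1 k A) (ybe2 k A)) (ybe3 k A)]
  rw [ybConv_assoc k hco (ybe1 k A) (ybe2 k A) (ybe3 k A)]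
  rw [ybConv_assoc k hco a' b'
    (ybConv k (ybe1 k A) (ybConv k (ybe2 k A) (ybe3 k A)))]

theorem yb_M5 :
    ((TensorProduct.assoc k A A A).symm.toLinearMap ∘ₗ lTensor A (Rmap k A) ∘ₗ
        (TensorProduct.assoc k A A A).toLinearMap) ∘ₗ (rTensor A (ybDelta k A) ∘ₗ ybDelta k A) =
      rTensor A (ybDelta k A) ∘ₗ ybDelta k A := by
  have h2 : rTensor A (ybDelta k A) ∘ₗ ybDelta k A =
      (TensorProduct.assoc k A A A).symm.toLinearMap ∘ₗ
        (lTensor A (comul (R := k)) ∘ₗ ybDelta k A) := by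
    rw [← yb_coaction]
    ext a
    simp
  have hl3 : lTensor A (Rmap k A) ∘ₗ lTensor A (comul (R := k)) =
      lTensor A (comul (R := k)) := by
    rw [← lTensor_comp, yb_Rmap_comp_comul]
  rw [h2]
  ext a
  simp only [LinearMap.comp_apply, LinearEquiv.coe_coe, LinearEquiv.apply_symm_apply]
  rw [← LinearMap.comp_apply (lTensor A (Rmap k A)), hl3]

/-! ### Assembly lemmas -/

theorem ybR12_tmul (x y c : A) :
    rTensor A (Rmap k A) ((x ⊗ₜ[k] y) ⊗ₜ[k] c) =
      (((1 : A) ⊗ₜ[k] x) ⊗ₜ[k] c) * ((ybDelta k A y) ⊗ₜ[k] (1 : A)) := by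
  rw [LinearMap.rTensor_tmul, Rmap_tmul, Algebra.TensorProduct.tmul_mul_tmul, mul_one]

theorem ybE3 (x y c : A) :
    (TensorProduct.assoc k A A A).symm ((lTensor A (Rmap k A))
        ((TensorProduct.assoc k A A A) ((x ⊗ₜ[k] y) ⊗ₜ[k] c))) =
      ((x ⊗ₜ[k] (1 : A)) ⊗ₜ[k] y) * (rTensor A (ybι k A)) (ybDelta k A c) := by
  rw [TensorProduct.assoc_tmul, LinearMap.lTensor_tmul, Rmap_tmul]
  generalize ybDelta k A c = t
  induction t with
  | zero => simp
  | add t₁ t₂ h1 h2 => simp only [mul_add, TensorProduct.tmul_add, map_add, h1, h2]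
  | tmul u v =>
    simp [Algebra.TensorProduct.tmul_mul_tmul, TensorProduct.assoc_symm_tmul]

theorem ybE4 (x c : A) (s : A ⊗[k] A) :
    (TensorProduct.assoc k A A A).symm ((lTensor A (Rmap k A))
        ((TensorProduct.assoc k A A A) ((((1 : A) ⊗ₜ[k] x) ⊗ₜ[k] c) * (s ⊗ₜ[k] (1 : A))))) =
      (rTensor A (ybκ k A) s) * ((((1 : A) ⊗ₜ[k] (1 : A))) ⊗ₜ[k] x) *
        (rTensor A (ybι k A)) (ybDelta k A c) := by
  induction s with
  | zero => simp
  | add s₁ s₂ h1 h2 =>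
    simp only [TensorProduct.add_tmul, mul_add, add_mul, map_add, h1, h2]
  | tmul p q =>
    rw [show (((1 : A) ⊗ₜ[k] x) ⊗ₜ[k] c) * ((p ⊗ₜ[k] q) ⊗ₜ[k] (1 : A)) =
        (p ⊗ₜ[k] (x * q)) ⊗ₜ[k] c by
      rw [Algebra.TensorProduct.tmul_mul_tmul, Algebra.TensorProduct.tmul_mul_tmul,
        one_mul, mul_one]]
    rw [ybE3]
    simp only [LinearMap.rTensor_tmul, ybκ_apply, ybι_apply]
    simp [Algebra.TensorProduct.tmul_mul_tmul, mul_comm]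

theorem ybE5 (x : A) (s t : A ⊗[k] A) :
    rTensor A (Rmap k A) ((rTensor A (ybκ k A) s) * (((1 : A) ⊗ₜ[k] (1 : A)) ⊗ₜ[k] x) *
        (rTensor A (ybι k A) t)) =
      (rTensor A (ybι k A) s) * (((1 : A) ⊗ₜ[k] (1 : A)) ⊗ₜ[k] x) *
        (rTensor A (ybDelta k A) t) := by
  induction s with
  | zero => simp
  | add s₁ s₂ h1 h2 => simp only [map_add, add_mul, h1, h2]
  | tmul p q =>
    induction t with
    | zero => simp
    | add t₁ t₂ h1 h2 => simp only [map_add, mul_add, h1, h2]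
    | tmul u v =>
      simp only [LinearMap.rTensor_tmul, ybκ_apply, ybι_apply]
      rw [show ((p ⊗ₜ[k] (1 : A)) ⊗ₜ[k] q) * (((1 : A) ⊗ₜ[k] (1 : A)) ⊗ₜ[k] x) *
          (((1 : A) ⊗ₜ[k] u) ⊗ₜ[k] v) = (p ⊗ₜ[k] u) ⊗ₜ[k] (q * x * v) by
        simp [Algebra.TensorProduct.tmul_mul_tmul]]
      rw [LinearMap.rTensor_tmul, Rmap_tmul,
        Algebra.TensorProduct.tmul_mul_tmul, Algebra.TensorProduct.tmul_mul_tmul]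
      simp [← Algebra.TensorProduct.one_def]

theorem ybE6 (x y : A) (t : A ⊗[k] A) :
    rTensor A (Rmap k A) (((x ⊗ₜ[k] (1 : A)) ⊗ₜ[k] y) * (rTensor A (ybι k A) t)) =
      (((1 : A) ⊗ₜ[k] x) ⊗ₜ[k] y) * (rTensor A (ybDelta k A) t) := by
  induction t with
  | zero => simp
  | add t₁ t₂ h1 h2 => simp only [map_add, mul_add, h1, h2]
  | tmul u v =>
    simp only [LinearMap.rTensor_tmul, ybι_apply]
    rw [show ((x ⊗ₜ[k] (1 : A)) ⊗ₜ[k] y) * (((1 : A) ⊗ₜ[k] u) ⊗ₜ[k] v) =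
        (x ⊗ₜ[k] u) ⊗ₜ[k] (y * v) by
      simp [Algebra.TensorProduct.tmul_mul_tmul]]
    rw [LinearMap.rTensor_tmul, Rmap_tmul, Algebra.TensorProduct.tmul_mul_tmul]

theorem ybE7 (x y : A) (w : (A ⊗[k] A) ⊗[k] A) :
    (TensorProduct.assoc k A A A).symm ((lTensor A (Rmap k A))
        ((TensorProduct.assoc k A A A) ((((1 : A) ⊗ₜ[k] x) ⊗ₜ[k] y) * w))) =
      (rTensor A (ybι k A) (ybDelta k A y)) * (((1 : A) ⊗ₜ[k] (1 : A)) ⊗ₜ[k] x) *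
        ((TensorProduct.assoc k A A A).symm ((lTensor A (Rmap k A))
          ((TensorProduct.assoc k A A A) w))) := by
  induction w with
  | zero => simp
  | add w₁ w₂ h1 h2 => simp only [mul_add, map_add, h1, h2]
  | tmul s z =>
    induction s with
    | zero => simp [TensorProduct.zero_tmul]
    | add s₁ s₂ h1 h2 =>
      simp only [TensorProduct.add_tmul, mul_add, map_add, h1, h2]
    | tmul z₁ z₂ =>
      rw [show (((1 : A) ⊗ₜ[k] x) ⊗ₜ[k] y) * ((z₁ ⊗ₜ[k] z₂) ⊗ₜ[k] z) =
          (z₁ ⊗ₜ[k] (x * z₂)) ⊗ₜ[k] (y * z) by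
        simp [Algebra.TensorProduct.tmul_mul_tmul]]
      rw [ybE3, ybE3]
      rw [ybDelta_mul]
      rw [show rTensor A (ybι k A) (ybDelta k A y * ybDelta k A z) =
          rTensor A (ybι k A) (ybDelta k A y) * rTensor A (ybι k A) (ybDelta k A z) by
        have : rTensor A (ybι k A) = TensorProduct.map (ybι k A) (LinearMap.id (R := k) (M := A)) := rfl
        rw [this]
        exact yb_map_mult k _ _
          (fun a b => by simp [Algebra.TensorProduct.tmul_mul_tmul]) (fun _ _ => rfl) _ _]
      rw [show ((z₁ ⊗ₜ[k] (1 : A)) ⊗ₜ[k] (x * z₂)) =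
          (((1 : A) ⊗ₜ[k] (1 : A)) ⊗ₜ[k] x) * ((z₁ ⊗ₜ[k] (1 : A)) ⊗ₜ[k] z₂) by
        simp [Algebra.TensorProduct.tmul_mul_tmul]]
      ring

theorem yb_M5_apply (c : A) :
    (TensorProduct.assoc k A A A).symm ((lTensor A (Rmap k A))
        ((TensorProduct.assoc k A A A) (rTensor A (ybDelta k A) (ybDelta k A c)))) =
      rTensor A (ybDelta k A) (ybDelta k A c) := by
  have h := congr($(yb_M5 k A) c)
  simpa using h

end YBAux

/-- for a commutative Hopf algebra, R satisfies the Yang–Baxter (braid)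
relation (R ⊗ id)(id ⊗ R)(R ⊗ id) = (id ⊗ R)(R ⊗ id)(id ⊗ R) on A ⊗ A ⊗ A. -/
theorem Rmap_yang_baxter :
    rTensor A (Rmap k A) ∘ₗ
        ((TensorProduct.assoc k A A A).symm.toLinearMap ∘ₗ lTensor A (Rmap k A) ∘ₗ
          (TensorProduct.assoc k A A A).toLinearMap) ∘ₗ rTensor A (Rmap k A) =
      ((TensorProduct.assoc k A A A).symm.toLinearMap ∘ₗ lTensor A (Rmap k A) ∘ₗ
          (TensorProduct.assoc k A A A).toLinearMap) ∘ₗ rTensor A (Rmap k A) ∘ₗ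
        (TensorProduct.assoc k A A A).symm.toLinearMap ∘ₗ lTensor A (Rmap k A) ∘ₗ
          (TensorProduct.assoc k A A A).toLinearMap := by
  apply TensorProduct.ext_threefold
  intro x y c
  simp only [LinearMap.comp_apply, LinearEquiv.coe_coe]
  rw [ybR12_tmul k A x y c, ybE4 k A x c (ybDelta k A y),
    ybE5 k A x (ybDelta k A y) (ybDelta k A c)]
  rw [ybE3 k A x y c, ybE6 k A x y (ybDelta k A c),
    ybE7 k A x y (rTensor A (ybDelta k A) (ybDelta k A c)), yb_M5_apply k A c]
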